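/- Let γ₁ and γ₂ be two up/right lattice paths in ℤ², with γ₁ going from (a, a₂) to (b, b₂) and γ₂ from (a, a₃) to (b, b₃), where a < b, a₂ ≤ a₃, and b₃ ≤ b₂. Then γ₁ and γ₂ share at least one common vertex. -/
import Mathlib


/-- A step of an up/right oriented lattice path in `ℤ²`. -/
def IsURStep (p q : ℤ × ℤ) : Prop := q = p + (1, 0) ∨ q = p + (0, 1)

/-- `γ` restricted to indices `0,…,n` is an up/right oriented lattice path. -/
def IsURPathFun (γ : ℕ → ℤ × ℤ) (n : ℕ) : Prop := ∀ i < n, IsURStep (γ i) (γ (i + 1))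

namespace URCross

lemma step_cases {p q : ℤ × ℤ} (h : IsURStep p q) :
    (q.1 = p.1 + 1 ∧ q.2 = p.2) ∨ (q.1 = p.1 ∧ q.2 = p.2 + 1) := by
  rcases h with h | h <;> subst h <;> simp

lemma mono_x {γ : ℕ → ℤ × ℤ} {n : ℕ} (h : IsURPathFun γ n) :
    ∀ j, j ≤ n → ∀ i, i ≤ j → (γ i).1 ≤ (γ j).1 := by
  intro j
  induction j with
  | zero => intro _ i hi; simp [Nat.le_zero.mp hi]
  | succ j ih =>
    intro hj i hi
    rcases Nat.lt_or_ge i (j + 1) with h' | h'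
    · have h1 := ih (by omega) i (by omega)
      rcases step_cases (h j (by omega)) with ⟨hx, _⟩ | ⟨hx, _⟩ <;> omega
    · have : i = j + 1 := by omega
      simp [this]

lemma mono_y {γ : ℕ → ℤ × ℤ} {n : ℕ} (h : IsURPathFun γ n) :
    ∀ j, j ≤ n → ∀ i, i ≤ j → (γ i).2 ≤ (γ j).2 := by
  intro j
  induction j with
  | zero => intro _ i hi; simp [Nat.le_zero.mp hi]
  | succ j ih =>
    intro hj i hi
    rcases Nat.lt_or_ge i (j + 1) with h' | h'
    · have h1 := ih (by omega) i (by omega)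
      rcases step_cases (h j (by omega)) with ⟨_, hy⟩ | ⟨_, hy⟩ <;> omega
    · have : i = j + 1 := by omega
      simp [this]

lemma col_shift {γ : ℕ → ℤ × ℤ} {n : ℕ} (h : IsURPathFun γ n) {i j : ℕ}
    (hij : i ≤ j) (hjn : j ≤ n) (hcol : (γ j).1 = (γ i).1) :
    ∀ t, i + t ≤ j → (γ (i + t)).1 = (γ i).1 ∧ (γ (i + t)).2 = (γ i).2 + t := by
  intro t
  induction t with
  | zero => simp
  | succ t ih =>
    intro ht
    obtain ⟨h1, h2⟩ := ih (by omega)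
    have hs := step_cases (h (i + t) (by omega))
    have hm1 := mono_x h j hjn (i + t + 1) (by omega)
    have heq : i + (t + 1) = (i + t) + 1 := by omega
    rw [heq]
    rcases hs with ⟨hx, hy⟩ | ⟨hx, hy⟩
    · exfalso; omega
    · push_cast; constructor <;> omega

lemma col_visit {γ : ℕ → ℤ × ℤ} {n : ℕ} (h : IsURPathFun γ n) {i j : ℕ}
    (hij : i ≤ j) (hjn : j ≤ n) (hcol : (γ j).1 = (γ i).1) {y : ℤ}
    (hy1 : (γ i).2 ≤ y) (hy2 : y ≤ (γ j).2) :
    ∃ k, i ≤ k ∧ k ≤ j ∧ γ k = ((γ i).1, y) := by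
  have hj := col_shift h hij hjn hcol (j - i) (by omega)
  rw [show i + (j - i) = j by omega] at hj
  set t := (y - (γ i).2).toNat with htdef
  have htle : i + t ≤ j := by omega
  obtain ⟨hx, hy⟩ := col_shift h hij hjn hcol t htle
  exact ⟨i + t, by omega, htle, by
    refine Prod.ext hx ?_
    rw [hy]; omega⟩

/-- The last index of the path lying in column `x` (when `x` is in range). -/
def Jf (γ : ℕ → ℤ × ℤ) (n : ℕ) (x : ℤ) : ℕ :=
  Nat.findGreatest (fun i => (γ i).1 ≤ x) n

lemma Jf_le (γ : ℕ → ℤ × ℤ) (n : ℕ) (x : ℤ) : Jf γ n x ≤ n :=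
  Nat.findGreatest_le n

lemma Jf_col {γ : ℕ → ℤ × ℤ} {n : ℕ} (h : IsURPathFun γ n) {x : ℤ}
    (hx0 : (γ 0).1 ≤ x) (hxn : x ≤ (γ n).1) : (γ (Jf γ n x)).1 = x := by
  have hP : (γ (Jf γ n x)).1 ≤ x :=
    Nat.findGreatest_spec (P := fun i => (γ i).1 ≤ x) (Nat.zero_le n) hx0
  rcases Nat.lt_or_ge (Jf γ n x) n with hlt | hge
  · have hgt : ¬ (γ (Jf γ n x + 1)).1 ≤ x :=
      Nat.findGreatest_is_greatest (P := fun i => (γ i).1 ≤ x) (n := n)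
        (Nat.lt_succ_self _) (by omega)
    rcases step_cases (h (Jf γ n x) hlt) with ⟨hx', _⟩ | ⟨hx', _⟩ <;> omega
  · have : Jf γ n x = n := le_antisymm (Jf_le γ n x) hge
    rw [this] at hP ⊢; omega

lemma Jf_step {γ : ℕ → ℤ × ℤ} {n : ℕ} (h : IsURPathFun γ n) {x : ℤ}
    (hx0 : (γ 0).1 ≤ x) (hxn : x < (γ n).1) :
    Jf γ n x < n ∧ γ (Jf γ n x + 1) = (x + 1, (γ (Jf γ n x)).2) := by
  have hcol := Jf_col h hx0 (le_of_lt hxn)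
  have hlt : Jf γ n x < n := by
    rcases Nat.lt_or_ge (Jf γ n x) n with hlt | hge
    · exact hlt
    · exfalso; have : Jf γ n x = n := le_antisymm (Jf_le γ n x) hge
      rw [this] at hcol; omega
  have hgt : ¬ (γ (Jf γ n x + 1)).1 ≤ x :=
    Nat.findGreatest_is_greatest (P := fun i => (γ i).1 ≤ x) (n := n)
      (Nat.lt_succ_self _) (by omega)
  rcases step_cases (h (Jf γ n x) hlt) with ⟨hx', hy'⟩ | ⟨hx', hy'⟩
  · exact ⟨hlt, Prod.ext (by omega) (by omega)⟩
  · exfalso; omega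

/-- The bottom height of the path in column `x`. -/
def mlow (γ : ℕ → ℤ × ℤ) (n : ℕ) (a c x : ℤ) : ℤ :=
  if x = a then c else (γ (Jf γ n (x - 1))).2

lemma start_idx {γ : ℕ → ℤ × ℤ} {n : ℕ} {a c b d : ℤ} (h : IsURPathFun γ n)
    (hs : γ 0 = (a, c)) (he : γ n = (b, d)) {x : ℤ} (hax : a ≤ x) (hxb : x ≤ b) :
    ∃ i, i ≤ Jf γ n x ∧ γ i = (x, mlow γ n a c x) := by
  have hx0 : (γ 0).1 = a := by rw [hs]
  have hxn : (γ n).1 = b := by rw [he]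
  by_cases hxa : x = a
  · refine ⟨0, Nat.le_findGreatest (Nat.zero_le n) (by omega), ?_⟩
    rw [mlow, if_pos hxa, hxa, hs]
  · have hstep := Jf_step h (x := x - 1) (by omega) (by omega)
    obtain ⟨hlt, hst⟩ := hstep
    refine ⟨Jf γ n (x - 1) + 1, Nat.le_findGreatest (by omega) ?_, ?_⟩
    · rw [hst]; simp
    · rw [hst, mlow, if_neg hxa]
      refine Prod.ext ?_ rfl
      simp

lemma m_le_M {γ : ℕ → ℤ × ℤ} {n : ℕ} {a c b d : ℤ} (h : IsURPathFun γ n)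
    (hs : γ 0 = (a, c)) (he : γ n = (b, d)) {x : ℤ} (hax : a ≤ x) (hxb : x ≤ b) :
    mlow γ n a c x ≤ (γ (Jf γ n x)).2 := by
  obtain ⟨i, hi, hγ⟩ := start_idx h hs he hax hxb
  have := mono_y h (Jf γ n x) (Jf_le γ n x) i hi
  rw [hγ] at this; exact this

lemma visits {γ : ℕ → ℤ × ℤ} {n : ℕ} {a c b d : ℤ} (h : IsURPathFun γ n)
    (hs : γ 0 = (a, c)) (he : γ n = (b, d)) {x : ℤ} (hax : a ≤ x) (hxb : x ≤ b)
    {y : ℤ} (hy1 : mlow γ n a c x ≤ y) (hy2 : y ≤ (γ (Jf γ n x)).2) :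
    ∃ k ≤ n, γ k = (x, y) := by
  obtain ⟨i, hi, hγ⟩ := start_idx h hs he hax hxb
  have hx0 : (γ 0).1 ≤ x := by rw [hs]; exact hax
  have hxn : x ≤ (γ n).1 := by rw [he]; exact hxb
  have hcol : (γ (Jf γ n x)).1 = (γ i).1 := by rw [Jf_col h hx0 hxn, hγ]
  obtain ⟨k, hik, hkJ, hk⟩ := col_visit h hi (Jf_le γ n x) hcol
    (by rw [hγ]; exact hy1) hy2
  refine ⟨k, le_trans hkJ (Jf_le γ n x), ?_⟩
  rw [hk, hγ]

lemma Jf_end {γ : ℕ → ℤ × ℤ} {n : ℕ} {b d : ℤ} (he : γ n = (b, d)) :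
    Jf γ n b = n := by
  have h1 : n ≤ Jf γ n b := Nat.le_findGreatest le_rfl (by rw [he])
  exact le_antisymm (Jf_le γ n b) h1

end URCross

/-- two up/right paths, the first starting weakly below the second at abscissa
`a` and ending weakly above it at abscissa `b`, must share a common vertex. -/
theorem ur_paths_cross (a b a₂ a₃ b₂ b₃ : ℤ) (n₁ n₂ : ℕ) (γ₁ γ₂ : ℕ → ℤ × ℤ)
    (hab : a < b) (ha : a₂ ≤ a₃) (hb : b₃ ≤ b₂)
    (h₁ : IsURPathFun γ₁ n₁) (h₁s : γ₁ 0 = (a, a₂)) (h₁e : γ₁ n₁ = (b, b₂))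
    (h₂ : IsURPathFun γ₂ n₂) (h₂s : γ₂ 0 = (a, a₃)) (h₂e : γ₂ n₂ = (b, b₃)) :
    ∃ i j : ℕ, i ≤ n₁ ∧ j ≤ n₂ ∧ γ₁ i = γ₂ j := by
  classical
  open URCross in
  set M₁ : ℤ → ℤ := fun x => (γ₁ (Jf γ₁ n₁ x)).2 with hM₁
  set M₂ : ℤ → ℤ := fun x => (γ₂ (Jf γ₂ n₂ x)).2 with hM₂
  -- at b, the tops are the endpoints
  have hM₁b : M₁ b = b₂ := by rw [hM₁]; simp only; rw [Jf_end h₁e, h₁e]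
  have hM₂b : M₂ b = b₃ := by rw [hM₂]; simp only; rw [Jf_end h₂e, h₂e]
  have hPex : ∃ k : ℕ, M₂ (a + k) ≤ M₁ (a + k) := by
    refine ⟨(b - a).toNat, ?_⟩
    rw [show a + ((b - a).toNat : ℤ) = b by omega, hM₁b, hM₂b]; exact hb
  set k₀ := Nat.find hPex with hk₀def
  have hk₀le : k₀ ≤ (b - a).toNat := Nat.find_min' hPex (by
    rw [show a + ((b - a).toNat : ℤ) = b by omega, hM₁b, hM₂b]; exact hb)
  set x := a + (k₀ : ℤ) with hxdef
  have hax : a ≤ x := by omega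
  have hxb : x ≤ b := by omega
  have hM : M₂ x ≤ M₁ x := Nat.find_spec hPex
  have hm : URCross.mlow γ₁ n₁ a a₂ x ≤ URCross.mlow γ₂ n₂ a a₃ x := by
    rcases Nat.eq_zero_or_pos k₀ with hk0 | hk0
    · have hxa : x = a := by omega
      rw [URCross.mlow, URCross.mlow, if_pos hxa, if_pos hxa]; exact ha
    · have hxa : x ≠ a := by omega
      have hnot : ¬ M₂ (a + (↑(k₀ - 1) : ℤ)) ≤ M₁ (a + (↑(k₀ - 1) : ℤ)) :=
        Nat.find_min hPex (by omega)
      have hx1 : a + (↑(k₀ - 1) : ℤ) = x - 1 := by push_cast [hk0]; omega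
      rw [hx1] at hnot
      rw [URCross.mlow, URCross.mlow, if_neg hxa, if_neg hxa]
      have : M₁ (x - 1) < M₂ (x - 1) := by omega
      exact le_of_lt this
  -- the common point
  set y := URCross.mlow γ₂ n₂ a a₃ x with hydef
  have hmM₂ : y ≤ M₂ x := URCross.m_le_M h₂ h₂s h₂e hax hxb
  obtain ⟨j, hjn, hj⟩ := URCross.visits h₂ h₂s h₂e hax hxb (le_refl y) hmM₂
  obtain ⟨i, hin, hi⟩ := URCross.visits h₁ h₁s h₁e hax hxb hm (le_trans hmM₂ hM)
  exact ⟨i, j, hin, hjn, by rw [hi, hj]⟩
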